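/- arXiv:2207.04054 — 3 statements merged into one kernel-verified Lean document; each statement's English description precedes it below -/
import Mathlib

section
/- Fix reals 0 < c < p and parameters λ > 0, k ≥ 1. Let g(w) = λ·(ln(p/w))^{1/k} for w ∈ (c,p) (the inverse of the Weibull survival function scaled by p). Then the function L(w) = g(w)·(w - c) is concave on (c,p); specifically, L''(w) = -(λ/(k²w²))·(ln(p/w))^{1/k - 2}·( k(w+c)·ln(p/w) + (k-1)(w-c) ) ≤ 0 for all w ∈ (c,p). -/
/-!
Write `u(w) = log (p / w)`, so that `u' = -1/w` and `L = λ u^r (w - c)` with `r = 1/k`.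
Differentiating twice gives `L'' = -(λ r / w²) u^(r-2) ((w + c) u + (1 - r)(w - c))`, and on
`(c, p)` every factor has a fixed sign as soon as `0 ≤ c` and `0 ≤ r ≤ 1`, i.e. `k ≥ 1`.
-/

open Real Set

theorem hasDerivAt_log_const_div {p w : ℝ} (hp : p ≠ 0) (hw : w ≠ 0) :
    HasDerivAt (fun x => log (p / x)) (-w⁻¹) w := by
  have h := ((hasDerivAt_inv hw).const_mul p).log (div_ne_zero hp hw)
  simp only [← div_eq_mul_inv] at h
  convert h using 1
  field_simp

theorem log_div_pos_of_lt {p w : ℝ} (hw : 0 < w) (hwp : w < p) : 0 < log (p / w) :=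
  log_pos ((one_lt_div hw).2 hwp)

noncomputable section

namespace WeibullMargin

def margin (lam r c p w : ℝ) : ℝ := lam * log (p / w) ^ r * (w - c)

def marginDeriv (lam r c p w : ℝ) : ℝ :=
  lam * (log (p / w) ^ r - r * (w - c) / w * log (p / w) ^ (r - 1))

def marginDeriv2 (lam r c p w : ℝ) : ℝ :=
  -(lam * r / w ^ 2) * log (p / w) ^ (r - 2) * ((w + c) * log (p / w) + (1 - r) * (w - c))

variable {lam r c p w : ℝ}

theorem hasDerivAt_margin (hw : 0 < w) (hwp : w < p) :
    HasDerivAt (margin lam r c p) (marginDeriv lam r c p w) w := by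
  have hu := (hasDerivAt_log_const_div (hw.trans hwp).ne' hw.ne').rpow_const (p := r)
    (Or.inl (log_div_pos_of_lt hw hwp).ne')
  refine ((hu.const_mul lam).mul ((hasDerivAt_id' w).sub_const c)).congr_deriv ?_
  rw [marginDeriv]
  field_simp
  ring

theorem hasDerivAt_marginDeriv (hw : 0 < w) (hwp : w < p) :
    HasDerivAt (marginDeriv lam r c p) (marginDeriv2 lam r c p w) w := by
  have hu_pos := log_div_pos_of_lt hw hwp
  have hu := hasDerivAt_log_const_div (hw.trans hwp).ne' hw.ne'
  have hquot : HasDerivAt (fun x => r * (x - c) / x) (r * c / w ^ 2) w := by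
    refine ((((hasDerivAt_id' w).sub_const c).const_mul r).div (hasDerivAt_id' w)
      hw.ne').congr_deriv ?_
    ring
  refine (((hu.rpow_const (p := r) (Or.inl hu_pos.ne')).sub
    (hquot.mul (hu.rpow_const (p := r - 1) (Or.inl hu_pos.ne')))).const_mul lam).congr_deriv ?_
  rw [marginDeriv2, show r - 1 - 1 = r - 2 by ring]
  set u := log (p / w)
  have hpow : u ^ (r - 1) = u ^ (r - 2) * u := by
    rw [← rpow_add_one hu_pos.ne']
    congr 1
    ring
  rw [hpow]
  field_simp
  ring

theorem deriv_margin_eventuallyEq (hw : 0 < w) (hwp : w < p) :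
    deriv (margin lam r c p) =ᶠ[nhds w] marginDeriv lam r c p := by
  filter_upwards [isOpen_Ioo.mem_nhds ⟨hw, hwp⟩] with x hx
  exact (hasDerivAt_margin hx.1 hx.2).deriv

theorem hasDerivAt_deriv_margin (hw : 0 < w) (hwp : w < p) :
    HasDerivAt (deriv (margin lam r c p)) (marginDeriv2 lam r c p w) w :=
  (hasDerivAt_marginDeriv hw hwp).congr_of_eventuallyEq (deriv_margin_eventuallyEq hw hwp)

theorem marginDeriv2_nonpos (hlam : 0 ≤ lam) (hr0 : 0 ≤ r) (hr1 : r ≤ 1) (hc : 0 ≤ c)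
    (hcw : c < w) (hwp : w < p) : marginDeriv2 lam r c p w ≤ 0 := by
  have hu := log_div_pos_of_lt (hc.trans_lt hcw) hwp
  have hbracket : 0 ≤ (w + c) * log (p / w) + (1 - r) * (w - c) :=
    add_nonneg (mul_nonneg (by linarith) hu.le) (mul_nonneg (by linarith) (by linarith))
  have hpos : 0 ≤ lam * r / w ^ 2 * log (p / w) ^ (r - 2) := by positivity
  rw [marginDeriv2, neg_mul, neg_mul, neg_nonpos]
  exact mul_nonneg hpos hbracket

theorem concaveOn_margin (hlam : 0 ≤ lam) (hr0 : 0 ≤ r) (hr1 : r ≤ 1) (hc : 0 ≤ c) :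
    ConcaveOn ℝ (Ioo c p) (margin lam r c p) := by
  have hw : ∀ w ∈ Ioo c p, 0 < w := fun w hw => hc.trans_lt hw.1
  refine concaveOn_of_deriv2_nonpos' (convex_Ioo c p) ?_ ?_ ?_
  · exact fun w hwI => (hasDerivAt_margin (hw w hwI) hwI.2).differentiableAt.differentiableWithinAt
  · exact fun w hwI =>
      (hasDerivAt_deriv_margin (hw w hwI) hwI.2).differentiableAt.differentiableWithinAt
  · intro w hwI
    rw [Function.iterate_succ_apply, Function.iterate_one,
      (hasDerivAt_deriv_margin (hw w hwI) hwI.2).deriv]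
    exact marginDeriv2_nonpos hlam hr0 hr1 hc hwI.1 hwI.2

end WeibullMargin

end

open WeibullMargin in
theorem stmt_5_general (c p lam k : ℝ) (hc : 0 < c)
    (hlam : 0 < lam) (hk : 1 ≤ k)
    (L : ℝ → ℝ)
    (hL : ∀ w, L w = lam * (Real.log (p / w)) ^ ((1:ℝ) / k) * (w - c)) :
    (∀ w ∈ Set.Ioo c p,
      deriv (deriv L) w =
        -(lam / (k ^ 2 * w ^ 2)) * (Real.log (p / w)) ^ ((1:ℝ) / k - 2) *
          (k * (w + c) * Real.log (p / w) + (k - 1) * (w - c)) ∧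
      deriv (deriv L) w ≤ 0) ∧
    ConcaveOn ℝ (Set.Ioo c p) L := by
  obtain rfl : L = margin lam (1 / k) c p := funext hL
  have hk0 : 0 < k := one_pos.trans_le hk
  have hr0 : 0 ≤ 1 / k := by positivity
  have hr1 : 1 / k ≤ 1 := (div_le_one hk0).2 hk
  refine ⟨fun w hw => ?_, concaveOn_margin hlam.le hr0 hr1 hc.le⟩
  have hw0 : 0 < w := hc.trans hw.1
  rw [(hasDerivAt_deriv_margin hw0 hw.2).deriv]
  refine ⟨?_, marginDeriv2_nonpos hlam.le hr0 hr1 hc.le hw.1 hw.2⟩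
  rw [marginDeriv2]
  field_simp

theorem stmt_5 (c p lam k : ℝ) (hc : 0 < c) (hcp : c < p)
    (hlam : 0 < lam) (hk : 1 ≤ k)
    (L : ℝ → ℝ)
    (hL : ∀ w, L w = lam * (Real.log (p / w)) ^ ((1:ℝ) / k) * (w - c)) :
    (∀ w ∈ Set.Ioo c p,
      deriv (deriv L) w =
        -(lam / (k ^ 2 * w ^ 2)) * (Real.log (p / w)) ^ ((1:ℝ) / k - 2) *
          (k * (w + c) * Real.log (p / w) + (k - 1) * (w - c)) ∧
      deriv (deriv L) w ≤ 0) ∧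
    ConcaveOn ℝ (Set.Ioo c p) L :=
  stmt_5_general c p lam k hc hlam hk L hL
end

section
/- Fix 0 < c < p ≤ 1. With uniform demand on [0,1], the equilibrium quantity q* = (p-c)/(2p) at the Stackelberg equilibrium yields social welfare p·q*(1 - q*/2) - c·q* = (3/4)·(p-c)²/(2p). Consequently, the ratio of the optimal social welfare (p-c)²/(2p) to the equilibrium social welfare equals 4/3. -/
theorem stmt_9 (c p : ℝ) (hc : 0 < c) (hcp : c < p) (hp1 : p ≤ 1)
    (qs : ℝ) (hqs : qs = (p - c) / (2 * p)) :
    p * qs * (1 - qs / 2) - c * qs = (3 / 4) * ((p - c) ^ 2 / (2 * p)) ∧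
    ((p - c) ^ 2 / (2 * p)) / (p * qs * (1 - qs / 2) - c * qs) = 4 / 3 := by
  have hp : (0:ℝ) < p := hc.trans hcp
  have hpc : (0:ℝ) < p - c := by linarith
  have h1 : p * qs * (1 - qs / 2) - c * qs = (3 / 4) * ((p - c) ^ 2 / (2 * p)) := by
    subst hqs; field_simp; ring
  refine ⟨h1, ?_⟩
  rw [h1]
  rw [div_eq_iff (by positivity)]
  ring
end

section
/- Let D be a random variable on [0,1] with density f ≥ L > 0, CDF F, and fix p ∈ (0,1]. For w ∈ (0,p), let q*_w = F⁻¹(1 - w/p) be the retailer's best response, and define the retailer's expected utility at best response U(w) = p·E[min(q*_w, D)] - q*_w·w. Then w ↦ U(w) is Lipschitz on (0,p) with constant at most 1/L + 1. -/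
open MeasureTheory Set

theorem stmt_16 (f : ℝ → ℝ) (L : ℝ) (hL : 0 < L)
    (hf : ContinuousOn f (Set.Icc 0 1))
    (hfL : ∀ x ∈ Set.Icc (0:ℝ) 1, L ≤ f x)
    (F : ℝ → ℝ) (hF : ∀ q, F q = ∫ x in (0:ℝ)..q, f x)
    (p : ℝ) (hp : 0 < p) (hp1 : p ≤ 1)
    (q : ℝ → ℝ)
    (hq : ∀ w ∈ Set.Ioo (0:ℝ) p, q w ∈ Set.Icc (0:ℝ) 1 ∧ p * (1 - F (q w)) = w)
    (U : ℝ → ℝ)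
    (hU : ∀ w, U w =
      p * ((∫ x in (0:ℝ)..(q w), x * f x) + q w * (1 - F (q w))) - q w * w) :
    ∀ w₁ ∈ Set.Ioo (0:ℝ) p, ∀ w₂ ∈ Set.Ioo (0:ℝ) p,
      |U w₁ - U w₂| ≤ (1 / L + 1) * |w₁ - w₂| := by
  have hg : ContinuousOn (fun x => x * f x) (Set.Icc 0 1) :=
    continuousOn_id.mul hf
  have hint : ∀ a b : ℝ, a ∈ Set.Icc (0:ℝ) 1 → b ∈ Set.Icc (0:ℝ) 1 →
      IntervalIntegrable (fun x => x * f x) volume a b := by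
    intro a b ha hb
    apply (hg.mono ?_).intervalIntegrable
    exact Set.uIcc_subset_Icc ha hb
  have hintf : ∀ a b : ℝ, a ∈ Set.Icc (0:ℝ) 1 → b ∈ Set.Icc (0:ℝ) 1 →
      IntervalIntegrable f volume a b := by
    intro a b ha hb
    apply (hf.mono ?_).intervalIntegrable
    exact Set.uIcc_subset_Icc ha hb
  have h01 : (0:ℝ) ∈ Set.Icc (0:ℝ) 1 := by norm_num
  -- key ordered case
  have key : ∀ w₁ ∈ Set.Ioo (0:ℝ) p, ∀ w₂ ∈ Set.Ioo (0:ℝ) p, q w₂ ≤ q w₁ →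
      |U w₁ - U w₂| ≤ |w₁ - w₂| := by
    intro w₁ hw₁ w₂ hw₂ hle
    obtain ⟨hq₁, he₁⟩ := hq w₁ hw₁
    obtain ⟨hq₂, he₂⟩ := hq w₂ hw₂
    have hU₁ : U w₁ = p * ∫ x in (0:ℝ)..(q w₁), x * f x := by
      rw [hU]; linear_combination q w₁ * he₁
    have hU₂ : U w₂ = p * ∫ x in (0:ℝ)..(q w₂), x * f x := by
      rw [hU]; linear_combination q w₂ * he₂
    have hsub : (∫ x in (0:ℝ)..(q w₁), x * f x) - (∫ x in (0:ℝ)..(q w₂), x * f x)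
        = ∫ x in (q w₂)..(q w₁), x * f x :=
      intervalIntegral.integral_interval_sub_left (hint 0 (q w₁) h01 hq₁)
        (hint 0 (q w₂) h01 hq₂)
    have hFdiff : F (q w₁) - F (q w₂) = ∫ x in (q w₂)..(q w₁), f x := by
      rw [hF, hF]
      exact intervalIntegral.integral_interval_sub_left (hintf 0 (q w₁) h01 hq₁)
        (hintf 0 (q w₂) h01 hq₂)
    have hsubIcc : Set.Icc (q w₂) (q w₁) ⊆ Set.Icc (0:ℝ) 1 :=
      Set.Icc_subset_Icc hq₂.1 hq₁.2
    have hnn : 0 ≤ ∫ x in (q w₂)..(q w₁), x * f x := by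
      apply intervalIntegral.integral_nonneg hle
      intro x hx
      have hx' := hsubIcc hx
      have := hfL x hx'
      nlinarith [hx'.1]
    have hmono : (∫ x in (q w₂)..(q w₁), x * f x) ≤ ∫ x in (q w₂)..(q w₁), f x := by
      apply intervalIntegral.integral_mono_on hle
        (hint _ _ hq₂ hq₁) (hintf _ _ hq₂ hq₁)
      intro x hx
      have hx' := hsubIcc hx
      have := hfL x hx'
      nlinarith [hx'.1, hx'.2]
    have hfnn : 0 ≤ ∫ x in (q w₂)..(q w₁), f x := by
      apply intervalIntegral.integral_nonneg hle
      intro x hx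
      have := hfL x (hsubIcc hx)
      linarith
    -- w₂ - w₁ = p * (F (q w₁) - F (q w₂))
    have hw : w₂ - w₁ = p * (F (q w₁) - F (q w₂)) := by linarith [he₁, he₂]
    have hw12 : w₁ ≤ w₂ := by nlinarith [hFdiff, hfnn]
    have habs : |U w₁ - U w₂| = p * ∫ x in (q w₂)..(q w₁), x * f x := by
      rw [hU₁, hU₂, ← mul_sub, hsub, abs_of_nonneg (by positivity)]
    rw [habs, abs_of_nonpos (by linarith : w₁ - w₂ ≤ 0)]
    nlinarith [hmono, hFdiff]
  intro w₁ hw₁ w₂ hw₂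
  have hbase : |U w₁ - U w₂| ≤ |w₁ - w₂| := by
    rcases le_total (q w₂) (q w₁) with h | h
    · exact key w₁ hw₁ w₂ hw₂ h
    · rw [abs_sub_comm (U w₁), abs_sub_comm w₁]
      exact key w₂ hw₂ w₁ hw₁ h
  have h1 : (1:ℝ) ≤ 1 / L + 1 := by
    have : 0 < 1 / L := by positivity
    linarith
  nlinarith [abs_nonneg (w₁ - w₂)]
end
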